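/- Let s ∈ {0,1} and κ ∈ ℂ, with κ ≠ 0 in the case s = 0. Let σ, σ̃ : ℝ → ℂ be twice differentiable functions that are Lebesgue integrable on (0, ∞). Suppose R : ℝ → Matrix (Fin 3) (Fin 3) ℂ is differentiable, R(x) is unit lower triangular for every x ≥ 0, and R'(x) + R(x)·F(σ̃)(x) = F(σ)(x)·R(x) for all x ≥ 0. Then σ(x) = σ̃(x) for all x ≥ 0, and R(x) is the identity matrix for all x ≥ 0. -/

import Mathlib

/-- The matrix F(σ) associated with the differential expression
ℓ_{σ,s,κ}(y) = y''' + s(σ'y)' + sσ'y' + κσ''y. -/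
noncomputable def Fmat (s κ : ℂ) (σ : ℝ → ℂ) (x : ℝ) : Matrix (Fin 3) (Fin 3) ℂ :=
  !![ -(s + κ) * σ x, 1, 0;
      -(3 * κ ^ 2 / 2 + s ^ 2 / 2 + 2 * κ * s) * σ x ^ 2, 2 * κ * σ x, 1;
      κ * (κ ^ 2 - s ^ 2) * σ x ^ 3,
        -(3 * κ ^ 2 / 2 + s ^ 2 / 2 - 2 * κ * s) * σ x ^ 2, (s - κ) * σ x ]

/-- A 3×3 matrix is unit lower triangular if its diagonal entries are 1 and the
entries above the diagonal are 0. -/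
def UnitLowerTriangular (A : Matrix (Fin 3) (Fin 3) ℂ) : Prop :=
  (∀ i, A i i = 1) ∧ ∀ i j : Fin 3, i < j → A i j = 0

open Set MeasureTheory

lemma deriv_transfer (f g : ℝ → ℂ) (f' g' : ℂ) (x : ℝ) (hx : x ∈ Set.Ici (0:ℝ))
    (hf : HasDerivAt f f' x) (hg : HasDerivAt g g' x)
    (h : ∀ y ∈ Set.Ici (0:ℝ), f y = g y) : f' = g' := by
  have h1 := hf.hasDerivWithinAt (s := Set.Ici 0)
  have h2 : HasDerivWithinAt f g' (Set.Ici 0) x :=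
    (hg.hasDerivWithinAt).congr (fun y hy => h y hy) (h x hx)
  rw [← h1.derivWithin (uniqueDiffOn_Ici 0 x hx), h2.derivWithin (uniqueDiffOn_Ici 0 x hx)]

lemma const_on_Ici (f f' : ℝ → ℂ) (hf : ∀ x, HasDerivAt f (f' x) x)
    (h0 : ∀ x ∈ Set.Ici (0:ℝ), f' x = 0) : ∀ x ∈ Set.Ici (0:ℝ), f x = f 0 := by
  intro x hx
  have key := Convex.norm_image_sub_le_of_norm_hasDerivWithin_le
    (f := f) (f' := f') (C := 0) (s := Set.Ici (0:ℝ))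
    (fun y hy => (hf y).hasDerivWithinAt) (fun y hy => by simp [h0 y hy]) (convex_Ici 0)
    self_mem_Ici hx
  have h2 : ‖f x - f 0‖ ≤ 0 := by simpa using key
  exact sub_eq_zero.mp (norm_le_zero_iff.mp h2)

lemma const_int (c : ℂ) (M : ℝ) (h : IntegrableOn (fun _ : ℝ => c) (Set.Ioi M)) : c = 0 := by
  rcases (integrableOn_const_iff enorm_ne_top).mp h with h | h
  · exact enorm_eq_zero.mp h
  · simp [Real.volume_Ioi] at h

lemma affine_int (α β : ℂ) (h : IntegrableOn (fun x : ℝ => α * x + β) (Set.Ioi 0)) :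
    α = 0 ∧ β = 0 := by
  have hα : α = 0 := by
    by_contra hα
    set M : ℝ := max 0 ((1 + ‖β‖) / ‖α‖) with hM
    have hM0 : (0:ℝ) ≤ M := le_max_left _ _
    have h1 : IntegrableOn (fun x : ℝ => α * x + β) (Set.Ioi M) :=
      h.mono_set (Set.Ioi_subset_Ioi hM0)
    have h2 : IntegrableOn (fun _ : ℝ => (1:ℂ)) (Set.Ioi M) := by
      refine MeasureTheory.Integrable.mono h1 aestronglyMeasurable_const ?_
      filter_upwards [ae_restrict_mem measurableSet_Ioi] with x hx
      have hx' : (1 + ‖β‖) / ‖α‖ ≤ x := le_trans (le_max_right _ _) (le_of_lt hx)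
      have hαpos : 0 < ‖α‖ := norm_pos_iff.mpr hα
      have hx'' : 1 + ‖β‖ ≤ ‖α‖ * x := by
        rw [div_le_iff₀ hαpos] at hx'; linarith [hx']
      have keyn : ‖α * (x:ℂ)‖ - ‖β‖ ≤ ‖α * x + β‖ := by
        have := norm_sub_le (α * x + β) β
        have h2 : α * x + β - β = α * x := by ring
        rw [h2] at this; linarith
      have hnx : ‖α * (x:ℂ)‖ = ‖α‖ * x := by
        rw [norm_mul, Complex.norm_real, Real.norm_eq_abs, abs_of_nonneg (le_trans hM0 hx.le)]
      simp only [norm_one]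
      nlinarith [keyn, hnx]
    exact one_ne_zero (const_int 1 M h2)
  refine ⟨hα, ?_⟩
  have : IntegrableOn (fun _ : ℝ => β) (Set.Ioi 0) := by
    apply h.congr_fun _ measurableSet_Ioi
    intro x hx; simp [hα]
  exact const_int β 0 this


/-- Analytic core of the uniqueness theorem on the half-line: if R is a
differentiable matrix function that is unit lower triangular on [0,∞) and satisfies
R' + R·F(σ̃) = F(σ)·R on [0,∞) (with s ∈ {0,1}, κ ≠ 0 when s = 0, and σ, σ̃ twice
differentiable and Lebesgue integrable on (0,∞)), then σ = σ̃ on [0,∞) and R is the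
identity matrix on [0,∞); no initial condition on R is needed. -/
theorem uniqueness_half_line (s : ℂ) (hs : s = 0 ∨ s = 1) (κ : ℂ)
    (hκ : s = 0 → κ ≠ 0) (σ σtil : ℝ → ℂ)
    (hσ1 : Differentiable ℝ σ) (hσ2 : Differentiable ℝ (deriv σ))
    (hσtil1 : Differentiable ℝ σtil) (hσtil2 : Differentiable ℝ (deriv σtil))
    (hσint : MeasureTheory.IntegrableOn σ (Set.Ioi (0 : ℝ)))
    (hσtilint : MeasureTheory.IntegrableOn σtil (Set.Ioi (0 : ℝ)))
    (R R' : ℝ → Matrix (Fin 3) (Fin 3) ℂ)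
    (hR : ∀ (x : ℝ) (i j : Fin 3), HasDerivAt (fun t => R t i j) (R' x i j) x)
    (hTri : ∀ x ∈ Set.Ici (0 : ℝ), UnitLowerTriangular (R x))
    (heq : ∀ x ∈ Set.Ici (0 : ℝ),
      R' x + R x * Fmat s κ σtil x = Fmat s κ σ x * R x) :
    (∀ x ∈ Set.Ici (0 : ℝ), σ x = σtil x)
    ∧ ∀ x ∈ Set.Ici (0 : ℝ), R x = 1 := by
  -- entry equations
  have E : ∀ x ∈ Set.Ici (0:ℝ), ∀ i j : Fin 3,
      R' x i j + (R x i 0 * Fmat s κ σtil x 0 j + R x i 1 * Fmat s κ σtil x 1 j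
        + R x i 2 * Fmat s κ σtil x 2 j)
      = Fmat s κ σ x i 0 * R x 0 j + Fmat s κ σ x i 1 * R x 1 j
        + Fmat s κ σ x i 2 * R x 2 j := by
    intro x hx i j
    have := congrFun (congrFun (heq x hx) i) j
    simpa [Matrix.mul_apply, Fin.sum_univ_three, Matrix.add_apply] using this
  -- zero derivatives of constant entries
  have hR'c : ∀ (i j : Fin 3) (c : ℂ), (∀ y ∈ Set.Ici (0:ℝ), R y i j = c) →
      ∀ x ∈ Set.Ici (0:ℝ), R' x i j = 0 := fun i j c h x hx =>
    deriv_transfer _ _ _ _ x hx (hR x i j) (hasDerivAt_const x c) h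
  have hR'00 := hR'c 0 0 1 (fun y hy => (hTri y hy).1 0)
  have hR'11 := hR'c 1 1 1 (fun y hy => (hTri y hy).1 1)
  have hR'22 := hR'c 2 2 1 (fun y hy => (hTri y hy).1 2)
  have hR'01 := hR'c 0 1 0 (fun y hy => (hTri y hy).2 0 1 (by decide))
  have hR'02 := hR'c 0 2 0 (fun y hy => (hTri y hy).2 0 2 (by decide))
  have hR'12 := hR'c 1 2 0 (fun y hy => (hTri y hy).2 1 2 (by decide))
  -- R 1 0
  have hA : ∀ x ∈ Set.Ici (0:ℝ), R x 1 0 = (s + κ) * (σ x - σtil x) := by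
    intro x hx
    have e := E x hx 0 0
    simp only [Fmat, Matrix.cons_val', Matrix.cons_val_zero, Matrix.cons_val_one,
      Matrix.head_cons, Matrix.empty_val', Matrix.cons_val_fin_one, Matrix.head_fin_const,
      Matrix.cons_val_two, Matrix.tail_cons, Matrix.of_apply] at e
    rw [(hTri x hx).1 0, (hTri x hx).2 0 1 (by decide), (hTri x hx).2 0 2 (by decide),
      hR'00 x hx] at e
    linear_combination -e
  -- R 2 1
  have hC : ∀ x ∈ Set.Ici (0:ℝ), R x 2 1 = (s - κ) * (σ x - σtil x) := by
    intro x hx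
    have e := E x hx 1 1
    simp only [Fmat, Matrix.cons_val', Matrix.cons_val_zero, Matrix.cons_val_one,
      Matrix.head_cons, Matrix.empty_val', Matrix.cons_val_fin_one, Matrix.head_fin_const,
      Matrix.cons_val_two, Matrix.tail_cons, Matrix.of_apply] at e
    rw [(hTri x hx).1 1, (hTri x hx).2 0 1 (by decide), (hTri x hx).2 1 2 (by decide),
      hR'11 x hx] at e
    linear_combination -e + hA x hx
  -- derivative transfers for R 1 0 and R 2 1
  have hA' : ∀ x ∈ Set.Ici (0:ℝ), R' x 1 0 = (s + κ) * (deriv σ x - deriv σtil x) := by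
    intro x hx
    exact deriv_transfer _ _ _ _ x hx (hR x 1 0)
      (((hσ1 x).hasDerivAt.sub (hσtil1 x).hasDerivAt).const_mul (s + κ)) hA
  have hC' : ∀ x ∈ Set.Ici (0:ℝ), R' x 2 1 = (s - κ) * (deriv σ x - deriv σtil x) := by
    intro x hx
    exact deriv_transfer _ _ _ _ x hx (hR x 2 1)
      (((hσ1 x).hasDerivAt.sub (hσtil1 x).hasDerivAt).const_mul (s - κ)) hC
  -- main step: σ - σtil is affine on [0,∞)
  have haff : ∃ α β : ℂ, ∀ x ∈ Set.Ici (0:ℝ), σ x - σtil x = α * x + β := by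
    rcases hs with hs0 | hs1
    · -- s = 0
      subst hs0
      have hκ0 := hκ rfl
      -- R 2 0
      have hB : ∀ x ∈ Set.Ici (0:ℝ), R x 2 0
          = κ * (deriv σ x - deriv σtil x) - κ ^ 2 / 2 * (σ x - σtil x) ^ 2 := by
        intro x hx
        have e := E x hx 1 0
        simp only [Fmat, Matrix.cons_val', Matrix.cons_val_zero, Matrix.cons_val_one,
          Matrix.head_cons, Matrix.empty_val', Matrix.cons_val_fin_one, Matrix.head_fin_const,
          Matrix.cons_val_two, Matrix.tail_cons, Matrix.of_apply] at e
        rw [(hTri x hx).1 0, (hTri x hx).1 1, (hTri x hx).2 1 2 (by decide),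
          hA x hx, hA' x hx] at e
        linear_combination -e
      -- derivative of R 2 0
      have hB' : ∀ x ∈ Set.Ici (0:ℝ), R' x 2 0
          = κ * (deriv (deriv σ) x - deriv (deriv σtil) x)
            - κ ^ 2 / 2 * (2 * (σ x - σtil x) * (deriv σ x - deriv σtil x)) := by
        intro x hx
        refine deriv_transfer _ _ _ _ x hx (hR x 2 0) ?_ hB
        have hpow : HasDerivAt (fun t => (σ t - σtil t) ^ 2)
            (2 * (σ x - σtil x) * (deriv σ x - deriv σtil x)) x := by
          have hu := (hσ1 x).hasDerivAt.sub (hσtil1 x).hasDerivAt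
          have h := hu.mul hu
          have hf : (fun t => (σ t - σtil t) ^ 2)
              = fun t => (σ t - σtil t) * (σ t - σtil t) := by funext t; ring
          rw [hf]; exact h.congr_deriv (by simp only [Pi.sub_apply]; ring)
        exact (((hσ2 x).hasDerivAt.sub (hσtil2 x).hasDerivAt).const_mul κ).sub
          (hpow.const_mul (κ ^ 2 / 2))
      -- second derivative vanishes
      have hdd : ∀ x ∈ Set.Ici (0:ℝ), deriv (deriv σ) x - deriv (deriv σtil) x = 0 := by
        intro x hx
        have e := E x hx 2 0
        simp only [Fmat, Matrix.cons_val', Matrix.cons_val_zero, Matrix.cons_val_one,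
          Matrix.head_cons, Matrix.empty_val', Matrix.cons_val_fin_one, Matrix.head_fin_const,
          Matrix.cons_val_two, Matrix.tail_cons, Matrix.of_apply] at e
        rw [(hTri x hx).1 0, (hTri x hx).1 2,
          hA x hx, hB x hx, hC x hx, hB' x hx] at e
        have hk : κ * (deriv (deriv σ) x - deriv (deriv σtil) x) = 0 := by
          linear_combination e
        exact (mul_eq_zero.mp hk).resolve_left hκ0
      -- deriv σ - deriv σtil is constant on [0,∞)
      have hdc := const_on_Ici (fun t => deriv σ t - deriv σtil t)
        (fun t => deriv (deriv σ) t - deriv (deriv σtil) t)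
        (fun t => (hσ2 t).hasDerivAt.sub (hσtil2 t).hasDerivAt) hdd
      refine ⟨deriv σ 0 - deriv σtil 0, σ 0 - σtil 0, ?_⟩
      have hder : ∀ t : ℝ, HasDerivAt
          (fun t : ℝ => σ t - σtil t - (deriv σ 0 - deriv σtil 0) * t)
          (deriv σ t - deriv σtil t - (deriv σ 0 - deriv σtil 0)) t := by
        intro t
        have hlin : HasDerivAt (fun t : ℝ => (deriv σ 0 - deriv σtil 0) * (t:ℂ))
            (deriv σ 0 - deriv σtil 0) t := by
          simpa using (Complex.ofRealCLM.hasDerivAt (x := t)).const_mul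
            (deriv σ 0 - deriv σtil 0)
        exact ((hσ1 t).hasDerivAt.sub (hσtil1 t).hasDerivAt).sub hlin
      have hzero : ∀ t ∈ Set.Ici (0:ℝ),
          deriv σ t - deriv σtil t - (deriv σ 0 - deriv σtil 0) = 0 := by
        intro t ht
        have h := hdc t ht
        rw [h]; ring
      have hw := const_on_Ici _ _ hder hzero
      intro x hx
      have h := hw x hx
      push_cast at h ⊢
      linear_combination h
    · -- s = 1
      subst hs1
      have hdz : ∀ x ∈ Set.Ici (0:ℝ), deriv σ x - deriv σtil x = 0 := by
        intro x hx
        have e10 := E x hx 1 0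
        have e21 := E x hx 2 1
        simp only [Fmat, Matrix.cons_val', Matrix.cons_val_zero, Matrix.cons_val_one,
          Matrix.head_cons, Matrix.empty_val', Matrix.cons_val_fin_one, Matrix.head_fin_const,
          Matrix.cons_val_two, Matrix.tail_cons, Matrix.of_apply] at e10 e21
        rw [(hTri x hx).1 0, (hTri x hx).1 1, (hTri x hx).2 1 2 (by decide),
          hA x hx, hA' x hx] at e10
        rw [(hTri x hx).1 1, (hTri x hx).1 2, (hTri x hx).2 0 1 (by decide),
          hC x hx, hC' x hx] at e21
        linear_combination (e10 + e21) / 2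
      have hdc := const_on_Ici (fun t => σ t - σtil t)
        (fun t => deriv σ t - deriv σtil t)
        (fun t => (hσ1 t).hasDerivAt.sub (hσtil1 t).hasDerivAt) hdz
      refine ⟨0, σ 0 - σtil 0, fun x hx => ?_⟩
      have h := hdc x hx
      rw [h]; ring
  obtain ⟨α, β, haff⟩ := haff
  have hint : IntegrableOn (fun x : ℝ => α * x + β) (Set.Ioi 0) := by
    apply MeasureTheory.IntegrableOn.congr_fun (hσint.sub hσtilint) _ measurableSet_Ioi
    intro x hx
    simpa using haff x (Set.mem_Ici.mpr (le_of_lt hx))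
  obtain ⟨hα, hβ⟩ := affine_int α β hint
  have hu0 : ∀ x ∈ Set.Ici (0:ℝ), σ x - σtil x = 0 := by
    intro x hx; rw [haff x hx, hα, hβ]; ring
  have hsub : ∀ x ∈ Set.Ici (0:ℝ), σ x = σtil x := fun x hx => sub_eq_zero.mp (hu0 x hx)
  refine ⟨hsub, ?_⟩
  -- derivative of difference vanishes on [0,∞)
  have hu' : ∀ x ∈ Set.Ici (0:ℝ), deriv σ x - deriv σtil x = 0 := by
    intro x hx
    exact deriv_transfer _ _ _ _ x hx ((hσ1 x).hasDerivAt.sub (hσtil1 x).hasDerivAt)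
      (hasDerivAt_const x 0) hu0
  -- R 2 0 = 0
  have hB0 : ∀ x ∈ Set.Ici (0:ℝ), R x 2 0 = 0 := by
    intro x hx
    have e := E x hx 1 0
    simp only [Fmat, Matrix.cons_val', Matrix.cons_val_zero, Matrix.cons_val_one,
      Matrix.head_cons, Matrix.empty_val', Matrix.cons_val_fin_one, Matrix.head_fin_const,
      Matrix.cons_val_two, Matrix.tail_cons, Matrix.of_apply] at e
    rw [(hTri x hx).1 0, (hTri x hx).1 1, (hTri x hx).2 1 2 (by decide),
      hA x hx, hA' x hx, hu0 x hx, hu' x hx, hsub x hx] at e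
    linear_combination -e
  intro x hx
  have h10 : R x 1 0 = 0 := by rw [hA x hx, hu0 x hx]; ring
  have h21 : R x 2 1 = 0 := by rw [hC x hx, hu0 x hx]; ring
  ext i j
  fin_cases i <;> fin_cases j <;>
    simp [Matrix.one_apply, (hTri x hx).1 0, (hTri x hx).1 1, (hTri x hx).1 2,
      (hTri x hx).2 0 1 (by decide), (hTri x hx).2 0 2 (by decide),
      (hTri x hx).2 1 2 (by decide), h10, h21, hB0 x hx]
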